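/- Let M be a monoid, A a set with a left M-action and a commuting right (M × M)-action, and an involution τ on A. Suppose the M-actions and the involution are compatible: τ(m·c) = m·τ(c), τ(c·(x,y)) = τ(c)·(y,x). Let d = (d₁,d₂) : A → M × M be equivariant for the left M-action (diagonal on M×M), the right (M×M)-action (by right multiplication), and the involution (which swaps factors of M × M). If d is injective, c ∈ A, a = d₁(c), and a^m = a^(m+r) for some m, r ≥ 1, then the element c' = a^m · c · (a^(r-1)·d₂(c), 1) satisfies c' = τ(c'). In particular the involution τ on A is not free. -/
import Mathlib


/-- Abstract 2-truncated operad structure: a monoid `M`, a set `A`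
with a left `M`-action `smul`, a commuting right `(M × M)`-action `ract`, an
involution `τ`, and equivariant face maps `d₁, d₂ : A → M`.  If `(d₁, d₂)` is
injective and `a ^ m = a ^ (m + r)` where `a = d₁ c`, then
`c' = a^m • c · (a^(r-1) * d₂ c, 1)` satisfies `c' = τ c'`; in particular `τ`
has a fixed point, so the `ℤ/2`-action is not free. -/
theorem stmt3 (M : Type*) [Monoid M] (A : Type*)
    (smul : M → A → A) (ract : A → M → M → A) (τ : A → A)
    (d₁ d₂ : A → M)
    -- left action axioms
    (hsmul_one : ∀ c, smul 1 c = c)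
    (hsmul_mul : ∀ m n c, smul (m * n) c = smul m (smul n c))
    -- right action axioms
    (hract_one : ∀ c, ract c 1 1 = c)
    (hract_mul : ∀ c x₁ y₁ x₂ y₂, ract c (x₁ * x₂) (y₁ * y₂) = ract (ract c x₁ y₁) x₂ y₂)
    -- the two actions commute
    (hcomm : ∀ m c x y, ract (smul m c) x y = smul m (ract c x y))
    -- involution axioms and compatibilities
    (hτ : ∀ c, τ (τ c) = c)
    (hτ_smul : ∀ m c, τ (smul m c) = smul m (τ c))
    (hτ_ract : ∀ c x y, τ (ract c x y) = ract (τ c) y x)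
    -- equivariance of the face maps
    (hd₁_smul : ∀ m c, d₁ (smul m c) = m * d₁ c)
    (hd₂_smul : ∀ m c, d₂ (smul m c) = m * d₂ c)
    (hd₁_ract : ∀ c x y, d₁ (ract c x y) = d₁ c * x)
    (hd₂_ract : ∀ c x y, d₂ (ract c x y) = d₂ c * y)
    (hd₁_τ : ∀ c, d₁ (τ c) = d₂ c)
    (hd₂_τ : ∀ c, d₂ (τ c) = d₁ c)
    -- `(d₁, d₂)` injective
    (hinj : ∀ c c', d₁ c = d₁ c' → d₂ c = d₂ c' → c = c')
    (c : A) (a : M) (ha : a = d₁ c) (m r : ℕ) (hm : 1 ≤ m) (hr : 1 ≤ r)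
    (hpow : a ^ m = a ^ (m + r)) :
    (smul (a ^ m) (ract c (a ^ (r - 1) * d₂ c) 1) =
      τ (smul (a ^ m) (ract c (a ^ (r - 1) * d₂ c) 1))) ∧
    ∃ z : A, τ z = z := by
  have key : ∀ c', d₁ c' = d₂ c' → c' = τ c' := by
    intro c' h
    exact hinj c' (τ c') (by rw [hd₁_τ, h]) (by rw [hd₂_τ, h])
  have haa : a * a ^ (r - 1) = a ^ r := by
    rw [← pow_succ']
    congr 1
    omega
  have h1 : d₁ (smul (a ^ m) (ract c (a ^ (r - 1) * d₂ c) 1)) = a ^ m * d₂ c := by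
    rw [hd₁_smul, hd₁_ract, ← ha, ← mul_assoc a, haa, ← mul_assoc, ← pow_add, ← hpow]
  have h2 : d₂ (smul (a ^ m) (ract c (a ^ (r - 1) * d₂ c) 1)) = a ^ m * d₂ c := by
    rw [hd₂_smul, hd₂_ract, mul_one]
  have hfix := key _ (h1.trans h2.symm)
  exact ⟨hfix, _, hfix.symm⟩
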